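/- For every n ∈ ℕ and all real numbers a, b, c, y one has S_n(y; a, b, c) = S_n(y; b, a, c); consequently S_n(y; a, b, c) is invariant under every permutation of the parameters (a, b, c) (symmetry in (b, c) being immediate from the definition). This is the statement, proved via Kummer's transformation, that the continuous dual Hahn polynomials are symmetric in a, b and c. -/

import Mathlib

/-! Symmetry in `b, c` is visible termwise. For `a ↔ b` induct on `n` with the recurrence
`S_{n+1}(a,b,c) = (a+b+n)(a+c+n) S_n(a,b,c) - (a²+y) S_n(a+1,b,c)`: by the induction hypothesis
the difference of the two sides for `(a,b,c)` and `(b,a,c)` reduces to the contiguous relation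
`(a²+y) S_n(a+1,b,c) - (b²+y) S_n(a,b+1,c) = (a-b)(a+b+n) S_n(a,b,c)`, which holds because the
termwise difference of its two sides telescopes. -/

open Finset

/-- Pochhammer symbol `(q)_m = q(q+1)⋯(q+m−1)` for a real `q`. -/
noncomputable def poch (q : ℝ) (m : ℕ) : ℝ := ∏ l ∈ Finset.range m, (q + l)

/-- The continuous dual Hahn polynomial
`S_n(y; a, b, c) = ∑_{j=0}^n (−1)^j (n choose j) (a+b+j)_{n−j} (a+c+j)_{n−j}
  ∏_{l=0}^{j−1} ((a+l)² + y)`. -/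
noncomputable def cdHahn (n : ℕ) (y a b c : ℝ) : ℝ :=
  ∑ j ∈ Finset.range (n + 1),
    (-1 : ℝ) ^ j * (n.choose j : ℝ) * poch (a + b + j) (n - j) * poch (a + c + j) (n - j) *
      ∏ l ∈ Finset.range j, ((a + l) ^ 2 + y)

lemma poch_succ_right (q : ℝ) (m : ℕ) : poch q (m + 1) = poch q m * (q + m) :=
  prod_range_succ _ _

lemma poch_succ_left (q : ℝ) (m : ℕ) : poch q (m + 1) = q * poch (q + 1) m := by
  rw [poch, prod_range_succ', poch, mul_comm, Nat.cast_zero, add_zero]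
  exact congrArg (q * ·) (prod_congr rfl fun l _ => by push_cast; ring)

lemma poch_add_one_sub_poch (q : ℝ) (m : ℕ) :
    poch (q + 1) m - poch q m = m * poch (q + 1) (m - 1) := by
  cases m with
  | zero => simp [poch]
  | succ k =>
    rw [Nat.add_sub_cancel, poch_succ_right, poch_succ_left]
    push_cast
    ring

noncomputable def sqProd (y a : ℝ) (j : ℕ) : ℝ := ∏ l ∈ range j, ((a + l) ^ 2 + y)

lemma sqProd_succ (y a : ℝ) (j : ℕ) : sqProd y a (j + 1) = sqProd y a j * ((a + j) ^ 2 + y) :=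
  prod_range_succ _ _

lemma sqProd_succ' (y a : ℝ) (j : ℕ) :
    sqProd y a (j + 1) = (a ^ 2 + y) * sqProd y (a + 1) j := by
  rw [sqProd, prod_range_succ', sqProd, mul_comm, Nat.cast_zero, add_zero]
  exact congrArg (_ * ·) (prod_congr rfl fun l _ => by push_cast; ring)

lemma cdHahn_eq_sum (n : ℕ) (y a b c : ℝ) :
    cdHahn n y a b c = ∑ j ∈ range (n + 1),
      (-1 : ℝ) ^ j * (n.choose j : ℝ) * poch (a + b + j) (n - j) * poch (a + c + j) (n - j) *
        sqProd y a j :=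
  rfl

lemma mul_cdHahn_add_one_eq_sum (m : ℕ) (y a b c : ℝ) :
    (a ^ 2 + y) * cdHahn m y (a + 1) b c = ∑ j ∈ range (m + 1),
      (-1 : ℝ) ^ j * (m.choose j : ℝ) * poch (a + b + 1 + j) (m - j) *
        poch (a + c + 1 + j) (m - j) * sqProd y a (j + 1) := by
  rw [cdHahn_eq_sum, mul_sum]
  refine sum_congr rfl fun j _ => ?_
  rw [sqProd_succ', add_right_comm a 1 b, add_right_comm a 1 c]
  ring

lemma cdHahn_succ (n : ℕ) (y a b c : ℝ) :
    cdHahn (n + 1) y a b c =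
      (a + b + n) * (a + c + n) * cdHahn n y a b c - (a ^ 2 + y) * cdHahn n y (a + 1) b c := by
  set g : ℕ → ℝ := fun j => (-1 : ℝ) ^ j * (n.choose j : ℝ) *
    poch (a + b + j) (n + 1 - j) * poch (a + c + j) (n + 1 - j) * sqProd y a j with hg
  have hg_top : g (n + 1) = 0 := by simp [hg]
  have hg_sum : (a + b + n) * (a + c + n) * cdHahn n y a b c = ∑ j ∈ range (n + 1), g j := by
    rw [cdHahn_eq_sum, mul_sum]
    refine sum_congr rfl fun j hj => ?_
    obtain ⟨k, rfl⟩ := Nat.exists_eq_add_of_le (Nat.lt_succ_iff.mp (mem_range.mp hj))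
    simp only [hg, add_assoc, Nat.add_sub_cancel_left, poch_succ_right]
    push_cast
    ring
  have hg_shift : ∑ j ∈ range (n + 1), g j = ∑ j ∈ range (n + 1), g (j + 1) + g 0 := by
    rw [← sum_range_succ', sum_range_succ g (n + 1), hg_top, add_zero]
  -- Pascal's rule `(n+1 choose j+1) = (n choose j) + (n choose j+1)` splits each term in two.
  rw [hg_sum, hg_shift, mul_cdHahn_add_one_eq_sum, cdHahn_eq_sum, sum_range_succ',
    add_sub_right_comm, ← sum_sub_distrib]
  congr 1
  · refine sum_congr rfl fun j _ => ?_
    simp only [hg, Nat.choose_succ_succ', Nat.succ_sub_succ]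
    push_cast
    ring_nf
  · simp [hg]

lemma cdHahn_contiguous (m : ℕ) (y a b c : ℝ) :
    (a ^ 2 + y) * cdHahn m y (a + 1) b c - (b ^ 2 + y) * cdHahn m y a (b + 1) c =
      (a - b) * (a + b + m) * cdHahn m y a b c := by
  set h : ℕ → ℝ := fun i => (-1 : ℝ) ^ i * (m.choose i * i : ℝ) *
    poch (a + b + i) (m + 1 - i) * poch (a + c + i) (m - i) * sqProd y a i with hh
  -- `h j - h (j + 1)` is the `j`-th term of the difference of the two sides.
  rw [← sub_eq_zero, mul_cdHahn_add_one_eq_sum, cdHahn_eq_sum, cdHahn_eq_sum, mul_sum, mul_sum,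
    ← sum_sub_distrib, ← sum_sub_distrib]
  calc _ = ∑ j ∈ range (m + 1), (h j - h (j + 1)) := sum_congr rfl fun j hj => ?_
    _ = 0 := by rw [sum_range_sub']; simp [hh]
  obtain ⟨k, rfl⟩ := Nat.exists_eq_add_of_le (Nat.lt_succ_iff.mp (mem_range.mp hj))
  have hk : j + k - j = k := by omega
  have hk₁ : j + k + 1 - j = k + 1 := by omega
  have hk₂ : j + k + 1 - (j + 1) = k := by omega
  have hk₃ : j + k - (j + 1) = k - 1 := by omega
  have hchoose : ((j + k).choose (j + 1) * (j + 1 : ℕ) : ℝ) = (j + k).choose j * k := by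
    exact_mod_cast (hk ▸ Nat.choose_succ_right_eq (j + k) j)
  have hprod := sqProd_succ y a j
  have hpoch_sub := poch_add_one_sub_poch (a + c + j) k
  have hpoch_left := poch_succ_left (a + b + j) k
  have hpoch_right := poch_succ_right (a + b + j) k
  simp only [hh, hk, hk₁, hk₂, hk₃]
  push_cast at hchoose ⊢
  linear_combination (norm := ring_nf)
    (-1 : ℝ) ^ j * (j + k).choose j * poch (a + b + j + 1) k * sqProd y a (j + 1) * hpoch_sub
    - (-1 : ℝ) ^ j * poch (a + b + j + 1) k * poch (a + c + j + 1) (k - 1) * sqProd y a (j + 1) *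
      hchoose
    + (-1 : ℝ) ^ j * (j + k).choose j * poch (a + b + j + 1) k * poch (a + c + j) k * hprod
    + (a - b) * (-1 : ℝ) ^ j * (j + k).choose j * poch (a + c + j) k * sqProd y a j * hpoch_right
    - (-1 : ℝ) ^ j * (j + k).choose j * poch (a + c + j) k * sqProd y a j * (a - b + j) *
      hpoch_left

lemma cdHahn_comm_ab (n : ℕ) (y a b c : ℝ) : cdHahn n y a b c = cdHahn n y b a c := by
  induction n generalizing a b with
  | zero => simp [cdHahn, poch, add_comm a b]
  | succ n ih =>
    rw [cdHahn_succ, cdHahn_succ]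
    linear_combination -cdHahn_contiguous n y a b c + (a + b + n) * (b + c + n) * ih a b
      - (b ^ 2 + y) * ih a (b + 1)

lemma cdHahn_comm_bc (n : ℕ) (y a b c : ℝ) : cdHahn n y a b c = cdHahn n y a c b :=
  sum_congr rfl fun _ _ => by ring

/-- The continuous dual Hahn polynomials are symmetric in the parameters `a`, `b`, `c`:
`S_n(y; a, b, c) = S_n(y; b, a, c)` and (immediately from the definition)
`S_n(y; a, b, c) = S_n(y; a, c, b)`; together these give invariance under every
permutation of `(a, b, c)`. -/
theorem cdHahn_symm (n : ℕ) (a b c y : ℝ) :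
    cdHahn n y a b c = cdHahn n y b a c ∧ cdHahn n y a b c = cdHahn n y a c b :=
  ⟨cdHahn_comm_ab n y a b c, cdHahn_comm_bc n y a b c⟩
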